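/- Bailey pair #3 (shifted Slater A7): The sequences β_n = q^{n²−n}/(q;q)_{2n} and α_m defined by α_m = ((1 − q^{2m+1})/(1 − q)) · c_m, where c_m = q^{(m²−2m)/3} if m ≡ 0 (mod 3), c_m = −q^{(m²−2m)/3} if m ≡ 2 (mod 3), and c_m = 0 if m ≡ 1 (mod 3), form a Bailey pair with respect to base a = q. -/

import Mathlib

/-!
Clearing denominators, the Bailey sum at `n` equals `G(2n+1, n, 0) / (q;q)_{2n+1}`, where
`G(N, k, b) = ∑_j c_j q^{b j} [N, k - j]`: the factor `1 - q^{2t+1}` of `α_t` splits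
`c_t [2n+1, n-t]` into the contributions of `j = t` and `j = -1 - t`, once `c` is extended to all
of `ℤ` (then `c_{-1-j} = -q^{2j+1} c_j`) and `[N, k] = [N, N - k]` is used.

The sums `G` obey the two q-Pascal recurrences in `N` and, since `c_{j+3} = q^{2j+1} c_j`, the
shift `G(N, k+3, b) = q^{3b+1} G(N, k, b+2)`. With `b ∈ {0, 1}` these close up on five monomial
values in each even row `N = 2n` and four in each odd row, which follow by induction on `n`; one
more Pascal step gives `G(2n+1, n, 0) = q^{n²-n} (1 - q^{2n+1})`.
-/

open Finset

noncomputable def qPoch (a q : ℂ) (n : ℕ) : ℂ :=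
  ∏ t ∈ Finset.range n, (1 - a * q ^ t)

noncomputable def qPochInf (a q : ℂ) : ℂ :=
  ∏' t : ℕ, (1 - a * q ^ t)

def IsBaileyPair (q a : ℂ) (α β : ℕ → ℂ) : Prop :=
  ∀ n : ℕ, β n =
    ∑ t ∈ Finset.range (n + 1), α t / (qPoch q q (n - t) * qPoch (a * q) q (n + t))

theorem qPoch_succ (a q : ℂ) (n : ℕ) : qPoch a q (n + 1) = qPoch a q n * (1 - a * q ^ n) :=
  prod_range_succ _ n

theorem qPoch_succ_eq_mul_qPoch_mul (a q : ℂ) (n : ℕ) :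
    qPoch a q (n + 1) = (1 - a) * qPoch (a * q) q n := by
  simp only [qPoch, prod_range_succ', pow_succ', pow_zero, mul_one, mul_assoc, mul_comm]

theorem qPoch_ne_zero {a q : ℂ} (ha : ‖a‖ < 1) (hq : ‖q‖ ≤ 1) (n : ℕ) :
    qPoch a q n ≠ 0 :=
  prod_ne_zero_iff.mpr fun t _ h => by
    have : ‖a * q ^ t‖ < 1 := by
      rw [norm_mul, norm_pow]
      exact (mul_le_of_le_one_right (norm_nonneg a) (pow_le_one₀ (norm_nonneg q) hq)).trans_lt ha
    exact this.ne (by rw [← sub_eq_zero.mp h, norm_one])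

theorem one_sub_mul_pow_ne_zero {q : ℂ} (hq : ‖q‖ < 1) (n : ℕ) : 1 - q * q ^ n ≠ 0 :=
  right_ne_zero_of_mul (qPoch_succ q q n ▸ qPoch_ne_zero hq hq.le (n + 1))

-- Extended by `0` to `m < 0`, so that `qBinom q N k` vanishes outside `0 ≤ k ≤ N` and
-- `qPochInvExt_sub_one` holds for every `m`: q-Pascal then needs no case distinction.
noncomputable def qPochInvExt (q : ℂ) (m : ℤ) : ℂ :=
  if 0 ≤ m then (qPoch q q m.toNat)⁻¹ else 0

theorem qPochInvExt_sub_one {q : ℂ} (hq : ‖q‖ < 1) (m : ℤ) :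
    qPochInvExt q (m - 1) = (1 - q ^ m) * qPochInvExt q m := by
  rcases lt_trichotomy m 0 with hm | rfl | hm
  · rw [qPochInvExt, qPochInvExt, if_neg (by omega), if_neg (by omega), mul_zero]
  · simp [qPochInvExt]
  · obtain ⟨s, rfl⟩ : ∃ s : ℕ, m = (s + 1 : ℕ) := ⟨(m - 1).toNat, by omega⟩
    have h₁ := qPoch_ne_zero hq hq.le s
    have h₂ := one_sub_mul_pow_ne_zero hq s
    rw [qPochInvExt, qPochInvExt, if_pos (by omega), if_pos (by omega), Int.toNat_natCast,
      show ((s + 1 : ℕ) : ℤ) - 1 = s by push_cast; ring, Int.toNat_natCast, zpow_natCast,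
      qPoch_succ, pow_succ']
    field_simp

noncomputable def qBinom (q : ℂ) (N : ℕ) (k : ℤ) : ℂ :=
  qPoch q q N * qPochInvExt q k * qPochInvExt q (N - k)

section qBinom

variable {q : ℂ}

theorem qBinom_of_neg {N : ℕ} {k : ℤ} (hk : k < 0) : qBinom q N k = 0 := by
  rw [qBinom, qPochInvExt, if_neg (by omega), mul_zero, zero_mul]

theorem qBinom_of_lt {N : ℕ} {k : ℤ} (hk : (N : ℤ) < k) : qBinom q N k = 0 := by
  rw [qBinom, show qPochInvExt q (N - k) = 0 from if_neg (by omega), mul_zero]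

theorem qBinom_sub (N : ℕ) (k : ℤ) : qBinom q N (N - k) = qBinom q N k := by
  rw [qBinom, qBinom, sub_sub_cancel, mul_right_comm]

theorem qBinom_natCast_of_le {n t : ℕ} (h : t ≤ n) :
    qBinom q n t = qPoch q q n * (qPoch q q t)⁻¹ * (qPoch q q (n - t))⁻¹ := by
  rw [qBinom, qPochInvExt, qPochInvExt, if_pos (by omega), if_pos (by omega), Int.toNat_natCast,
    ← Nat.cast_sub h, Int.toNat_natCast]

variable (hq0 : q ≠ 0) (hq1 : ‖q‖ < 1)
include hq0 hq1

theorem qBinom_succ (N : ℕ) (k : ℤ) :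
    qBinom q (N + 1) k = qBinom q N k + q ^ ((N : ℤ) + 1 - k) * qBinom q N (k - 1) := by
  have hpow : q ^ ((N : ℤ) + 1 - k) * q ^ k = q * q ^ N := by
    rw [← zpow_add₀ hq0, sub_add_cancel, ← pow_succ']
    norm_cast
  rw [qBinom, qBinom, qBinom, qPoch_succ, qPochInvExt_sub_one hq1, Nat.cast_succ,
    show (N : ℤ) - k = N + 1 - k - 1 by ring, qPochInvExt_sub_one hq1,
    show (N : ℤ) - (k - 1) = N + 1 - k by ring]
  linear_combination qPoch q q N * qPochInvExt q k * qPochInvExt q (N + 1 - k) * hpow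

theorem qBinom_succ' (N : ℕ) (k : ℤ) :
    qBinom q (N + 1) k = q ^ k * qBinom q N k + qBinom q N (k - 1) := by
  have h := qBinom_succ hq0 hq1 N (N + 1 - k)
  rw [← Nat.cast_succ, qBinom_sub, Nat.cast_succ, sub_sub_cancel,
    show (N : ℤ) + 1 - k = N - (k - 1) by ring, qBinom_sub,
    show (N : ℤ) - (k - 1) - 1 = N - k by ring, qBinom_sub] at h
  rw [h, add_comm]

end qBinom

-- `c_j` of the statement, for all `j : ℤ`.
noncomputable def slaterCoeff (q : ℂ) (j : ℤ) : ℂ :=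
  if j % 3 = 0 then q ^ ((j ^ 2 - 2 * j) / 3)
  else if j % 3 = 2 then -q ^ ((j ^ 2 - 2 * j) / 3) else 0

theorem sq_sub_two_mul_add_three_div_three (j : ℤ) :
    ((j + 3) ^ 2 - 2 * (j + 3)) / 3 = (j ^ 2 - 2 * j) / 3 + (2 * j + 1) := by
  rw [show (j + 3) ^ 2 - 2 * (j + 3) = j ^ 2 - 2 * j + (2 * j + 1) * 3 by ring,
    Int.add_mul_ediv_right _ _ (by norm_num)]

section slaterCoeff

variable {q : ℂ} (hq : q ≠ 0)
include hq

theorem slaterCoeff_add_three (j : ℤ) :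
    slaterCoeff q (j + 3) = q ^ (2 * j + 1) * slaterCoeff q j := by
  have hmod : (j + 3) % 3 = j % 3 := by omega
  simp only [slaterCoeff, hmod, sq_sub_two_mul_add_three_div_three, zpow_add₀ hq]
  split_ifs <;> ring

theorem slaterCoeff_neg_sub_one (j : ℤ) :
    slaterCoeff q (-1 - j) = -(q ^ (2 * j + 1) * slaterCoeff q j) := by
  have hexp : ((-1 - j) ^ 2 - 2 * (-1 - j)) / 3 = (j ^ 2 - 2 * j) / 3 + (2 * j + 1) := by
    rw [← sq_sub_two_mul_add_three_div_three]; ring_nf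
  rcases (by omega : j % 3 = 0 ∨ j % 3 = 1 ∨ j % 3 = 2) with h | h | h
  · simp [slaterCoeff, h, (by omega : (-1 - j) % 3 = 2), hexp, zpow_add₀ hq]
    ring
  · simp [slaterCoeff, h, (by omega : (-1 - j) % 3 = 1)]
  · simp [slaterCoeff, h, (by omega : (-1 - j) % 3 = 0), hexp, zpow_add₀ hq]
    ring

end slaterCoeff

theorem slaterCoeff_natCast (q : ℂ) (t : ℕ) :
    slaterCoeff q t = if t % 3 = 0 then q ^ ((t ^ 2 - 2 * t) / 3)
      else if t % 3 = 2 then -q ^ ((t ^ 2 - 2 * t) / 3) else 0 := by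
  have hexp (h : t % 3 ≠ 1) : q ^ (((t : ℤ) ^ 2 - 2 * t) / 3) = q ^ ((t ^ 2 - 2 * t) / 3) := by
    have : 2 * t ≤ t ^ 2 := by rcases t with _ | _ | t <;> [simp; omega; nlinarith]
    rw [← zpow_natCast, Int.natCast_ediv, Nat.cast_sub this]
    push_cast
    rfl
  rcases (by omega : t % 3 = 0 ∨ t % 3 = 1 ∨ t % 3 = 2) with h | h | h
  · rw [slaterCoeff, if_pos (by omega), if_pos h, hexp (by omega)]
  · rw [slaterCoeff, if_neg (by omega), if_neg (by omega), if_neg (by omega), if_neg (by omega)]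
  · rw [slaterCoeff, if_neg (by omega), if_pos (by omega), if_neg (by omega), if_pos h,
      hexp (by omega)]

-- `G(N, k, b) = ∑_j c_j q^{b j} [N, k - j]`, summed over `i = k - j`.
noncomputable def binomSum (q : ℂ) (N : ℕ) (k b : ℤ) : ℂ :=
  ∑ i ∈ range (N + 1), slaterCoeff q (k - i) * q ^ (b * (k - i)) * qBinom q N i

section binomSum

variable {q : ℂ}

theorem binomSum_zero (k b : ℤ) : binomSum q 0 k b = slaterCoeff q k * q ^ (b * k) := by
  simp [binomSum, qBinom, qPochInvExt, qPoch]

variable (hq0 : q ≠ 0) (hq1 : ‖q‖ < 1)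
include hq0

theorem binomSum_add_three (N : ℕ) {k k' b b' : ℤ} (hk : k = k' + 3) (hb : b' = b + 2) :
    binomSum q N k b = q ^ (3 * b + 1) * binomSum q N k' b' := by
  subst hk hb
  rw [binomSum, binomSum, mul_sum]
  refine sum_congr rfl fun i _ => ?_
  rw [show k' + 3 - i = k' - i + 3 by ring, slaterCoeff_add_three hq0]
  have hpow : q ^ (2 * (k' - i) + 1) * q ^ (b * (k' - i + 3)) =
      q ^ (3 * b + 1) * q ^ ((b + 2) * (k' - i)) := by
    simp only [← zpow_add₀ hq0]; ring_nf
  linear_combination slaterCoeff q (k' - i) * qBinom q N i * hpow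

theorem binomSum_odd_center_eq_sum_range (n : ℕ) :
    binomSum q (2 * n + 1) n 0 = ∑ t ∈ range (n + 1),
      (1 - q ^ (2 * t + 1)) * slaterCoeff q t * qBinom q (2 * n + 1) (n - t) := by
  rw [binomSum, show 2 * n + 1 + 1 = (n + 1) + (n + 1) by ring, sum_range_add,
    ← sum_range_reflect, ← sum_add_distrib]
  refine sum_congr rfl fun t ht => ?_
  have ht : t ≤ n := Nat.lt_succ_iff.mp (mem_range.mp ht)
  rw [show ((n + 1 - 1 - t : ℕ) : ℤ) = n - t by omega, sub_sub_cancel,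
    show (n : ℤ) - ((n + 1 + t : ℕ) : ℤ) = -1 - t by push_cast; ring,
    slaterCoeff_neg_sub_one hq0, ← qBinom_sub _ ((n + 1 + t : ℕ) : ℤ),
    show ((2 * n + 1 : ℕ) : ℤ) - ((n + 1 + t : ℕ) : ℤ) = n - t by push_cast; ring,
    ← zpow_natCast]
  simp only [zero_mul, zpow_zero, mul_one]
  push_cast
  ring

include hq1

-- The index relations are hypotheses so that a rewrite leaves every index in the caller's form.
theorem binomSum_succ (N : ℕ) {k k' b b' : ℤ} (hk : k = k' + 1) (hb : b' = b + 1) :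
    binomSum q (N + 1) k b = binomSum q N k b + q ^ ((N : ℤ) + 1 - k) * binomSum q N k' b' := by
  subst hk hb
  simp only [binomSum, qBinom_succ hq0 hq1, mul_add, sum_add_distrib, mul_sum]
  congr 1
  · rw [sum_range_succ, qBinom_of_lt (by push_cast; omega), mul_zero, add_zero]
  · rw [sum_range_succ', Nat.cast_zero, zero_sub, qBinom_of_neg (by norm_num), mul_zero,
      mul_zero, add_zero]
    refine sum_congr rfl fun i _ => ?_
    rw [show k' + 1 - ((i + 1 : ℕ) : ℤ) = k' - i by push_cast; ring,
      show ((i + 1 : ℕ) : ℤ) - 1 = i by push_cast; ring]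
    have hpow : q ^ (b * (k' - i)) * q ^ ((N : ℤ) + 1 - ((i + 1 : ℕ) : ℤ)) =
        q ^ ((N : ℤ) + 1 - (k' + 1)) * q ^ ((b + 1) * (k' - i)) := by
      simp only [← zpow_add₀ hq0]; push_cast; ring_nf
    linear_combination slaterCoeff q (k' - i) * qBinom q N i * hpow

theorem binomSum_succ' (N : ℕ) {k k' b b' : ℤ} (hk : k = k' + 1) (hb : b = b' + 1) :
    binomSum q (N + 1) k b = q ^ k * binomSum q N k b' + binomSum q N k' b := by
  subst hk hb
  simp only [binomSum, qBinom_succ' hq0 hq1, mul_add, sum_add_distrib, mul_sum]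
  congr 1
  · rw [sum_range_succ, qBinom_of_lt (by push_cast; omega), mul_zero, mul_zero, add_zero]
    refine sum_congr rfl fun i _ => ?_
    have hpow : q ^ ((b' + 1) * (k' + 1 - i)) * q ^ (i : ℤ) =
        q ^ (k' + 1) * q ^ (b' * (k' + 1 - i)) := by
      simp only [← zpow_add₀ hq0]; ring_nf
    linear_combination slaterCoeff q (k' + 1 - i) * qBinom q N i * hpow
  · rw [sum_range_succ', Nat.cast_zero, zero_sub, qBinom_of_neg (by norm_num), mul_zero,
      add_zero]
    refine sum_congr rfl fun i _ => ?_
    rw [show k' + 1 - ((i + 1 : ℕ) : ℤ) = k' - i by push_cast; ring,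
      show ((i + 1 : ℕ) : ℤ) - 1 = i by push_cast; ring]

theorem binomSum_succ_zero (N : ℕ) {k k₁ k₂ : ℤ} (h₁ : k = k₁ + 3)
    (h₂ : k = k₂ + 1) :
    binomSum q (N + 1) k 0 = q ^ (k - 2) * binomSum q N k₁ 1 + binomSum q N k₂ 0 := by
  rw [binomSum_succ' hq0 hq1 N h₂ (b' := -1) (by norm_num),
    binomSum_add_three hq0 N h₁ (b' := 1) (by norm_num), ← mul_assoc, ← zpow_add₀ hq0]
  ring_nf

theorem binomSum_succ_one (N : ℕ) {k k₂ : ℤ} (h : k₂ = k + 2) :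
    binomSum q (N + 1) k 1 = binomSum q N k 1 + q ^ ((N : ℤ) - k) * binomSum q N k₂ 0 := by
  rw [binomSum_succ hq0 hq1 N (k' := k - 1) (b' := 2) (by ring) (by norm_num),
    binomSum_add_three hq0 N (k := k₂) (k' := k - 1) (b := 0) (b' := 2) (by omega) (by norm_num),
    ← mul_assoc, ← zpow_add₀ hq0]
  ring_nf

end binomSum

def EvenRow (q : ℂ) (n : ℕ) : Prop :=
  binomSum q (2 * n) n 0 = q ^ ((n : ℤ) ^ 2 - n) ∧
  binomSum q (2 * n) (n + 1) 0 = 0 ∧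
  binomSum q (2 * n) (n + 2) 0 = -q ^ ((n : ℤ) ^ 2 - n) ∧
  binomSum q (2 * n) (n - 1) 1 = -q ^ ((n : ℤ) ^ 2) ∧
  binomSum q (2 * n) n 1 = q ^ ((n : ℤ) ^ 2)

def OddRow (q : ℂ) (n : ℕ) : Prop :=
  binomSum q (2 * n + 1) (n + 1) 0 = q ^ ((n : ℤ) ^ 2 + n) ∧
  binomSum q (2 * n + 1) (n + 2) 0 = -q ^ ((n : ℤ) ^ 2 + n) ∧
  binomSum q (2 * n + 1) n 1 = 0 ∧
  binomSum q (2 * n + 1) (n + 1) 1 = q ^ ((n : ℤ) ^ 2)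

section rows

variable {q : ℂ} (hq0 : q ≠ 0)
include hq0

theorem evenRow_zero : EvenRow q 0 := by
  simp [EvenRow, binomSum_zero, slaterCoeff, hq0]

variable (hq1 : ‖q‖ < 1)
include hq1

theorem oddRow_of_evenRow {n : ℕ} (h : EvenRow q n) : OddRow q n := by
  obtain ⟨-, e₁, e₂, e₃, e₄⟩ := h
  refine ⟨?_, ?_, ?_, ?_⟩
  · rw [binomSum_succ hq0 hq1 _ (k' := n) (b' := 1) rfl (by norm_num), e₁, e₄]
    push_cast; simp only [zero_add, ← zpow_add₀ hq0]; ring_nf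
  · rw [binomSum_succ_zero hq0 hq1 _ (k₁ := n - 1) (k₂ := n + 1) (by ring) (by ring), e₃,
      e₁]
    simp only [add_zero, mul_neg, ← zpow_add₀ hq0]; ring_nf
  · rw [binomSum_succ_one hq0 hq1 _ (k₂ := n + 2) rfl, e₄, e₂]
    push_cast; simp only [mul_neg, ← zpow_add₀ hq0]; ring_nf
  · rw [binomSum_succ' hq0 hq1 _ (k' := n) (b' := 0) rfl (by norm_num), e₁, e₄]
    simp

theorem evenRow_succ_of_oddRow {n : ℕ} (h : OddRow q n) : EvenRow q (n + 1) := by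
  obtain ⟨o₁, o₂, o₃, o₄⟩ := h
  rw [EvenRow, show 2 * (n + 1) = 2 * n + 1 + 1 by ring]
  push_cast
  refine ⟨?_, ?_, ?_, ?_, ?_⟩
  · rw [binomSum_succ hq0 hq1 _ (k' := n) (b' := 1) rfl (by norm_num), o₁, o₃, mul_zero,
      add_zero]
    ring_nf
  · rw [show (n : ℤ) + 1 + 1 = n + 2 by ring,
      binomSum_succ hq0 hq1 _ (k' := n + 1) (b' := 1) (by ring) (by norm_num), o₂, o₄]
    push_cast; simp only [← zpow_add₀ hq0]; ring_nf
  · rw [binomSum_succ_zero hq0 hq1 _ (k₁ := n) (k₂ := n + 2) (by ring) (by ring), o₃, o₂]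
    ring_nf
  · rw [add_sub_cancel_right, binomSum_succ_one hq0 hq1 _ (k₂ := n + 2) rfl, o₃, o₂]
    push_cast; simp only [zero_add, mul_neg, ← zpow_add₀ hq0]; ring_nf
  · rw [binomSum_succ' hq0 hq1 _ (k' := n) (b' := 0) rfl (by norm_num), o₁, o₃, add_zero,
      ← zpow_add₀ hq0]
    ring_nf

theorem evenRow (n : ℕ) : EvenRow q n := by
  induction n with
  | zero => exact evenRow_zero hq0
  | succ n ih => exact evenRow_succ_of_oddRow hq0 hq1 (oddRow_of_evenRow hq0 hq1 ih)

theorem binomSum_odd_center (n : ℕ) :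
    binomSum q (2 * n + 1) n 0 = q ^ (n ^ 2 - n) * (1 - q ^ (2 * n + 1)) := by
  obtain ⟨e₀, -, -, e₃, -⟩ := evenRow hq0 hq1 n
  rw [binomSum_succ hq0 hq1 _ (k' := n - 1) (b' := 1) (by ring) (by norm_num), e₀, e₃,
    ← zpow_natCast, Nat.cast_sub (Nat.le_self_pow two_ne_zero n), ← zpow_natCast]
  push_cast
  simp only [mul_neg, mul_sub, mul_one, ← zpow_add₀ hq0]
  ring_nf

end rows

theorem div_qPoch_mul_qPoch_eq_qBinom_div {q : ℂ} (hq1 : ‖q‖ < 1) {n t : ℕ} (ht : t ≤ n)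
    (x : ℂ) : x / (1 - q) / (qPoch q q (n - t) * qPoch (q * q) q (n + t)) =
      x * qBinom q (2 * n + 1) (n - t) / qPoch q q (2 * n + 1) := by
  have h₁ := qPoch_ne_zero hq1 hq1.le (n - t)
  have h₂ := qPoch_ne_zero hq1 hq1.le (2 * n + 1)
  have h₃ : 1 - q ≠ 0 := by simpa using one_sub_mul_pow_ne_zero hq1 0
  have h₄ : qPoch (q * q) q (n + t) ≠ 0 :=
    right_ne_zero_of_mul <|
      qPoch_succ_eq_mul_qPoch_mul q q _ ▸ qPoch_ne_zero hq1 hq1.le (n + t + 1)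
  rw [← Nat.cast_sub ht, qBinom_natCast_of_le (by omega),
    show 2 * n + 1 - (n - t) = n + t + 1 by omega, qPoch_succ_eq_mul_qPoch_mul q q (n + t)]
  field_simp

theorem bailey_pair_3 (q : ℂ) (hq0 : 0 < ‖q‖) (hq1 : ‖q‖ < 1) :
    IsBaileyPair q q
      (fun m => (1 - q ^ (2 * m + 1)) / (1 - q) *
        (if m % 3 = 0 then q ^ ((m ^ 2 - 2 * m) / 3)
          else if m % 3 = 2 then -q ^ ((m ^ 2 - 2 * m) / 3) else 0))
      (fun n => q ^ (n ^ 2 - n) / qPoch q q (2 * n)) := by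
  have hq : q ≠ 0 := norm_pos_iff.mp hq0
  intro n
  simp only [← slaterCoeff_natCast, div_mul_eq_mul_div]
  rw [sum_congr rfl fun t ht => div_qPoch_mul_qPoch_eq_qBinom_div hq1 (by simp at ht; omega) _,
    ← sum_div, ← binomSum_odd_center_eq_sum_range hq, binomSum_odd_center hq hq1, qPoch_succ,
    pow_succ' q (2 * n), mul_div_mul_right _ _ (one_sub_mul_pow_ne_zero hq1 _)]
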